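/- Let R be an LM-system with a rule whose root pair is (f, g), f ≠ g. Then no term with root symbol g can be reduced modulo R (in one or more steps) to a term with root symbol f. -/

import Mathlib

/-! Basic first-order terms, positions, substitutions and rewriting. -/

inductive Term (F : Type) : Type
  | var : Nat → Term F
  | app : F → List (Term F) → Term F

namespace Term

def subst {F : Type} (σ : Nat → Term F) : Term F → Term F
  | var n => σ n
  | app f ts => app f (ts.attach.map fun ⟨t, _⟩ => t.subst σ)

def root {F : Type} : Term F → Option F
  | var _ => none
  | app f _ => some f

def label {F : Type} : Term F → F ⊕ Nat
  | var n => Sum.inr n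
  | app f _ => Sum.inl f

def IsVar {F : Type} : Term F → Prop
  | var _ => True
  | app _ _ => False

def varsL {F : Type} : Term F → List Nat
  | var n => [n]
  | app _ ts => (ts.attach.map fun ⟨t, _⟩ => t.varsL).flatten

end Term

abbrev Rule (F : Type) := Term F × Term F
abbrev TRS (F : Type) := Set (Rule F)

/-- `SubtermAt t p u` : the subterm of `t` at position `p` is `u`. -/
inductive SubtermAt {F : Type} : Term F → List Nat → Term F → Prop
  | here (t : Term F) : SubtermAt t [] t
  | there {f : F} {ts : List (Term F)} {i : Nat} {u : Term F} {p : List Nat} {v : Term F} :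
      ts[i]? = some u → SubtermAt u p v → SubtermAt (Term.app f ts) (i :: p) v

/-- `ReplaceAt t p v t'` : replacing the subterm of `t` at position `p` by `v` yields `t'`. -/
inductive ReplaceAt {F : Type} : Term F → List Nat → Term F → Term F → Prop
  | here (t u : Term F) : ReplaceAt t [] u u
  | there {f : F} {ts : List (Term F)} {i : Nat} {u : Term F} {p : List Nat} {v w : Term F} :
      ts[i]? = some u → ReplaceAt u p v w →
      ReplaceAt (Term.app f ts) (i :: p) v (Term.app f (ts.set i w))

variable {F : Type}

/-- One rewrite step using the given rule (at some position, with some substitution). -/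
def RuleStep (ρ : Rule F) (s t : Term F) : Prop :=
  ∃ (σ : Nat → Term F) (p : List Nat),
    SubtermAt s p (ρ.1.subst σ) ∧ ReplaceAt s p (ρ.2.subst σ) t

def OneStep (R : TRS F) (s t : Term F) : Prop := ∃ ρ ∈ R, RuleStep ρ s t

/-- A rewrite step at the root position. -/
def RootStep (R : TRS F) (s t : Term F) : Prop :=
  ∃ ρ ∈ R, ∃ σ : Nat → Term F, s = ρ.1.subst σ ∧ t = ρ.2.subst σ

def StarRW (R : TRS F) : Term F → Term F → Prop := Relation.ReflTransGen (OneStep R)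
def Plus (R : TRS F) : Term F → Term F → Prop := Relation.TransGen (OneStep R)
/-- Convertibility (the congruence / equational theory generated by `R`). -/
def Conv (R : TRS F) : Term F → Term F → Prop := Relation.EqvGen (OneStep R)
def Joinable (R : TRS F) (s t : Term F) : Prop := ∃ u, StarRW R s u ∧ StarRW R t u
def NormalForm (R : TRS F) (t : Term F) : Prop := ∀ u, ¬ OneStep R t u
/-- `t` is the `R`-normal form of `s`. -/
def NFof (R : TRS F) (s t : Term F) : Prop := StarRW R s t ∧ NormalForm R t
def Terminating (R : TRS F) : Prop := WellFounded (fun a b : Term F => OneStep R b a)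
def Confluent (R : TRS F) : Prop := ∀ s t u, StarRW R s t → StarRW R s u → Joinable R t u
def Convergent (R : TRS F) : Prop := Confluent R ∧ Terminating R

/-- every proper subterm is irreducible -/
def EpsIrreducible (R : TRS F) (t : Term F) : Prop :=
  ∀ p u, SubtermAt t p u → p ≠ [] → NormalForm R u

def InnermostRedex (R : TRS F) (t : Term F) : Prop :=
  EpsIrreducible R t ∧ ¬ NormalForm R t

/-- Forward-closed, via the one-step-to-normal-form characterization. -/
def FCclosed (R : TRS F) : Prop :=
  ∀ t, InnermostRedex R t → ∀ u, NFof R t u → OneStep R t u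

def Unifies (σ : Nat → Term F) (s t : Term F) : Prop := s.subst σ = t.subst σ

def IsMGU (σ : Nat → Term F) (s t : Term F) : Prop :=
  Unifies σ s t ∧ ∀ τ, Unifies τ s t → ∃ δ, ∀ x, τ x = (σ x).subst δ

def IsRenaming (ρ : Nat → Term F) : Prop :=
  ∃ f : Nat → Nat, Function.Injective f ∧ ∀ n, ρ n = Term.var (f n)

/-- Redundancy criterion for an oriented equation `e` whose right-hand side is
reachable from its left-hand side: some proper subterm of the lhs is reducible. -/
def Redundant (R : TRS F) (e : Rule F) : Prop :=
  ∃ p u, p ≠ ([] : List Nat) ∧ SubtermAt e.1 p u ∧ ¬ NormalForm R u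

/-- `R₁ ↝ R₂`: forward overlaps of rules of `R₂` (renamed apart) into
right-hand sides of rules of `R₁`, at non-variable positions, via an mgu. -/
def FStep (R₁ R₂ : TRS F) : TRS F :=
  { e | ∃ (l₁ r₁ l₂ r₂ : Term F) (ρ : Nat → Term F) (p : List Nat) (u : Term F)
          (σ : Nat → Term F) (r₁' : Term F),
      (l₁, r₁) ∈ R₁ ∧ (l₂, r₂) ∈ R₂ ∧ IsRenaming ρ ∧
      SubtermAt r₁ p u ∧ ¬ u.IsVar ∧ IsMGU σ u (l₂.subst ρ) ∧
      ReplaceAt r₁ p (r₂.subst ρ) r₁' ∧ e = (l₁.subst σ, r₁'.subst σ) }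

def FCiter (R : TRS F) : Nat → TRS F
  | 0 => R
  | k + 1 => FCiter R k ∪ { e | e ∈ FStep (FCiter R k) R ∧ ¬ Redundant (FCiter R k) e }

def FCinf (R : TRS F) : TRS F := ⋃ k, FCiter R k

/-- Forward-closed, via the forward-closure construction: `FC(R) = R`. -/
def ForwardClosedFC (R : TRS F) : Prop := FCinf R = R

/-- `RHS(R)`: `R` together with the conclusions of right-hand-side critical
pair inferences (second rule renamed apart). -/
def RHSset (R : TRS F) : TRS F :=
  R ∪ { e | ∃ (s t u₀ v₀ : Term F) (ρ σ : Nat → Term F), (s, t) ∈ R ∧ (u₀, v₀) ∈ R ∧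
        IsRenaming ρ ∧ IsMGU σ t (v₀.subst ρ) ∧
        s.subst σ ≠ (u₀.subst ρ).subst σ ∧ e = (s.subst σ, (u₀.subst ρ).subst σ) }

/-- the (unordered) pairs of root symbols of two equations coincide -/
def RootPairSimilar (e₁ e₂ : Rule F) : Prop :=
  (e₁.1.root = e₂.1.root ∧ e₁.2.root = e₂.2.root) ∨
  (e₁.1.root = e₂.2.root ∧ e₁.2.root = e₂.1.root)

def QuasiDet (E : TRS F) : Prop :=
  (∀ e ∈ E, ¬ e.1.IsVar ∧ ¬ e.2.IsVar) ∧
  (∀ e ∈ E, e.1.root ≠ e.2.root) ∧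
  (∀ e₁ ∈ E, ∀ e₂ ∈ E, e₁ ≠ e₂ → ¬ RootPairSimilar e₁ e₂)

def HasRootPairRepetition (E : TRS F) : Prop :=
  ∃ e₁ ∈ E, ∃ e₂ ∈ E, e₁ ≠ e₂ ∧ RootPairSimilar e₁ e₂

def VarPreserving (R : TRS F) : Prop :=
  ∀ e ∈ R, ∀ n, n ∈ Term.varsL e.1 ↔ n ∈ Term.varsL e.2

def RightReduced (R : TRS F) : Prop := ∀ e ∈ R, NormalForm R e.2

def AlmostLeftReduced (R : TRS F) : Prop :=
  ¬ ∃ (l₁ r₁ l₂ r₂ : Term F) (p : List Nat) (u : Term F) (σ : Nat → Term F),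
      (l₁, r₁) ∈ R ∧ (l₂, r₂) ∈ R ∧ p ≠ [] ∧ SubtermAt l₁ p u ∧ u = l₂.subst σ

def NonSubtermCollapsing (R : TRS F) : Prop :=
  ¬ ∃ (t u : Term F) (p : List Nat), p ≠ [] ∧ SubtermAt u p t ∧ Conv R t u

structure LMSystem (R : TRS F) : Prop where
  convergent : Convergent R
  almostLeftReduced : AlmostLeftReduced R
  rightReduced : RightReduced R
  nonCollapsing : NonSubtermCollapsing R
  forwardClosed : FCclosed R
  quasiDet : QuasiDet (RHSset R)

/-- the symbol (function symbol or variable) of a term at a position, if defined -/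
def labelAt {F : Type} : List Nat → Term F → Option (F ⊕ Nat)
  | [], t => some t.label
  | i :: p, Term.app _ ts => ts[i]?.bind (labelAt p)
  | _ :: _, Term.var _ => none

/-- outermost distinguishing position -/
def ODP (s t : Term F) (p : List Nat) : Prop :=
  (labelAt p s ≠ none ∨ labelAt p t ≠ none) ∧
  labelAt p s ≠ labelAt p t ∧
  ∀ q, q <+: p → q ≠ p → labelAt q s = labelAt q t


/-!
Induct on `s` along `→⁺`, and let `w` be the common normal form of `s` and `t`. In a
forward-closed convergent system the normal form of `h(u₁, …, uₙ)` is reached by normalising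
the arguments and then taking at most one root step. If `w` did not have root `g`, the
normalisation of `s` would end with a root step by a rule with left root `g`. If `w` has root
`f`, that rule has root pair `(g, f)`. Otherwise the normalisation of `t` ends with a root step
by a rule with left root `f`, and the two right-hand sides unify, so they give an `RHS`
critical pair with root pair `(g, f)`. Both cases contradict quasi-determinism of `RHS(R)`,
because `(f, g)` is already there. Hence `w` has root `g`. Since `s →⁺ t` changes the root
symbol, it contains a root step `l'σ → r'σ` with `root l' = g ≠ root r'`, and `r'σ →⁺ w` is a
reversal of `(l', r')` that starts strictly below `s`.
-/

namespace Term

@[elab_as_elim]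
theorem ind {P : Term F → Prop} (hvar : ∀ n, P (var n))
    (happ : ∀ f ts, (∀ t ∈ ts, P t) → P (app f ts)) : ∀ t, P t
  | .var n => hvar n
  | .app f ts => happ f ts fun t _ => ind hvar happ t

def size : Term F → Nat
  | var _ => 1
  | app _ ts => 1 + (ts.map size).sum

theorem size_pos (t : Term F) : 0 < t.size := by
  cases t <;> simp [size]

theorem size_app (f : F) (ts : List (Term F)) : (app f ts).size = 1 + (ts.map size).sum := by
  simp [size]

theorem size_lt_size_app {t : Term F} {ts : List (Term F)} (h : t ∈ ts) (f : F) :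
    t.size < (app f ts).size := by
  have := List.le_sum_of_mem (List.mem_map_of_mem (f := size) h)
  rw [size_app]
  omega

@[simp] theorem subst_var (σ : Nat → Term F) (n : Nat) : (var n).subst σ = σ n := by
  simp [subst]

@[simp] theorem subst_app (σ : Nat → Term F) (f : F) (ts : List (Term F)) :
    (app f ts).subst σ = app f (ts.map (·.subst σ)) := by
  simp [subst]

theorem mem_varsL_app {n : Nat} {f : F} {ts : List (Term F)} :
    n ∈ (app f ts).varsL ↔ ∃ t ∈ ts, n ∈ t.varsL := by
  simp [varsL]

theorem subst_subst (σ τ : Nat → Term F) (t : Term F) :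
    (t.subst σ).subst τ = t.subst fun n => (σ n).subst τ := by
  induction t using Term.ind with
  | hvar n => simp
  | happ f ts ih => simpa using List.map_congr_left ih

theorem subst_congr {σ τ : Nat → Term F} {t : Term F} (h : ∀ n ∈ t.varsL, σ n = τ n) :
    t.subst σ = t.subst τ := by
  induction t using Term.ind with
  | hvar n => simpa [varsL] using h
  | happ f ts ih =>
    simpa using List.map_congr_left fun t ht =>
      ih t ht fun n hn => h n (mem_varsL_app.2 ⟨t, ht, hn⟩)

theorem subst_eq_self {σ : Nat → Term F} {t : Term F} (h : ∀ n ∈ t.varsL, σ n = var n) :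
    t.subst σ = t := by
  induction t using Term.ind with
  | hvar n => simpa [varsL] using h
  | happ f ts ih =>
    simpa using List.map_congr_left fun t ht =>
      ih t ht fun n hn => h n (mem_varsL_app.2 ⟨t, ht, hn⟩)

theorem mem_varsL_subst {σ : Nat → Term F} {t : Term F} {n : Nat} :
    n ∈ (t.subst σ).varsL ↔ ∃ m ∈ t.varsL, n ∈ (σ m).varsL := by
  induction t using Term.ind with
  | hvar k => simp [varsL]
  | happ f ts ih =>
    simp only [subst_app, mem_varsL_app, List.mem_map]
    constructor
    · rintro ⟨_, ⟨t, ht, rfl⟩, hn⟩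
      obtain ⟨m, hm, hnm⟩ := (ih t ht).1 hn
      exact ⟨m, ⟨t, ht, hm⟩, hnm⟩
    · rintro ⟨m, ⟨t, ht, hm⟩, hnm⟩
      exact ⟨_, ⟨t, ht, rfl⟩, (ih t ht).2 ⟨m, hm, hnm⟩⟩

theorem mem_varsL_subst_update {x n : Nat} {v t : Term F} (hx : x ∉ v.varsL)
    (hn : n ∈ (t.subst (Function.update var x v)).varsL) :
    n ≠ x ∧ (n ∈ t.varsL ∨ n ∈ v.varsL) := by
  obtain ⟨m, hm, hnm⟩ := mem_varsL_subst.1 hn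
  by_cases hmx : m = x
  · subst hmx
    simp only [Function.update_self] at hnm
    exact ⟨fun h => hx (h ▸ hnm), .inr hnm⟩
  · simp only [ne_eq, hmx, not_false_eq_true, Function.update_of_ne, varsL,
      List.mem_singleton] at hnm
    exact ⟨hnm ▸ hmx, .inl (hnm ▸ hm)⟩

theorem size_le_size_subst {σ : Nat → Term F} {t : Term F} {n : Nat} (h : n ∈ t.varsL) :
    (σ n).size ≤ (t.subst σ).size := by
  induction t using Term.ind with
  | hvar k => simp_all [varsL]
  | happ f ts ih =>
    obtain ⟨t, ht, hn⟩ := mem_varsL_app.1 h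
    exact (ih t ht hn).trans (subst_app σ f ts ▸ size_lt_size_app (List.mem_map_of_mem ht) f).le

theorem eq_var_of_subst_eq {σ : Nat → Term F} {t : Term F} {n : Nat} (hn : n ∈ t.varsL)
    (h : σ n = t.subst σ) : t = var n := by
  cases t with
  | var k => simp_all [varsL]
  | app f ts =>
    obtain ⟨t, ht, hn⟩ := mem_varsL_app.1 hn
    have h₁ := size_le_size_subst (σ := σ) hn
    have h₂ := size_lt_size_app (List.mem_map_of_mem (f := (·.subst σ)) ht) f
    rw [← subst_app, ← h] at h₂
    omega

theorem not_isVar_iff {t : Term F} : ¬ t.IsVar ↔ ∃ f ts, t = app f ts := by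
  cases t <;> simp [IsVar]

theorem exists_root_eq_some {t : Term F} (h : ¬ t.IsVar) : ∃ f, t.root = some f := by
  obtain ⟨f, ts, rfl⟩ := not_isVar_iff.1 h
  exact ⟨f, rfl⟩

theorem root_subst {t : Term F} (h : ¬ t.IsVar) (σ : Nat → Term F) :
    (t.subst σ).root = t.root := by
  obtain ⟨f, ts, rfl⟩ := not_isVar_iff.1 h
  simp [root]

end Term

section Rewriting

variable {R : TRS F}

theorem SubtermAt.append {t u v : Term F} {p q : List Nat} (h₁ : SubtermAt t p u)
    (h₂ : SubtermAt u q v) : SubtermAt t (p ++ q) v := by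
  induction h₁ with
  | here => exact h₂
  | there hi _ ih => exact .there hi (ih h₂)

theorem SubtermAt.exists_replaceAt_append {t u a b : Term F} {p q : List Nat}
    (h₁ : SubtermAt t p u) (h₂ : ReplaceAt u q a b) : ∃ t', ReplaceAt t (p ++ q) a t' := by
  induction h₁ with
  | here => exact ⟨b, h₂⟩
  | there hi _ ih =>
    obtain ⟨t', ht'⟩ := ih h₂
    exact ⟨_, .there hi ht'⟩

theorem NormalForm.subtermAt {t u : Term F} {p : List Nat} (ht : NormalForm R t)
    (h : SubtermAt t p u) : NormalForm R u := by
  rintro u' ⟨ρ, hρ, σ, q, hsub, hrep⟩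
  obtain ⟨t', ht'⟩ := h.exists_replaceAt_append hrep
  exact ht t' ⟨ρ, hρ, σ, p ++ q, h.append hsub, ht'⟩

theorem NormalForm.eq_of_starRW {a b : Term F} (ha : NormalForm R a) (h : StarRW R a b) :
    a = b := by
  rcases h.cases_head with h | ⟨c, hac, _⟩
  · exact h
  · exact absurd hac (ha c)

theorem Plus.of_starRW_of_ne {a b : Term F} (h : StarRW R a b) (hne : a ≠ b) : Plus R a b := by
  rcases h.cases_head with h | ⟨c, hac, hcb⟩
  · exact absurd h hne
  · exact .head' hac hcb

theorem exists_nfOf (hT : Terminating R) (t : Term F) : ∃ w, NFof R t w := by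
  induction t using hT.induction with
  | _ t ih =>
    by_cases h : NormalForm R t
    · exact ⟨t, .refl, h⟩
    · obtain ⟨u, hu⟩ := not_forall_not.1 h
      obtain ⟨w, huw, hw⟩ := ih u hu
      exact ⟨w, .head hu huw, hw⟩

theorem NFof.of_starRW (hC : Confluent R) {u v w : Term F} (h : NFof R u w)
    (huv : StarRW R u v) : NFof R v w := by
  obtain ⟨z, hwz, hvz⟩ := hC u w v h.1 huv
  exact ⟨h.2.eq_of_starRW hwz ▸ hvz, h.2⟩

theorem OneStep.rootStep_or_root_eq {a b : Term F} (h : OneStep R a b) :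
    RootStep R a b ∨ a.root = b.root := by
  obtain ⟨ρ, hρ, σ, p, hsub, hrep⟩ := h
  cases hrep with
  | here => cases hsub; exact .inl ⟨ρ, hρ, σ, rfl, rfl⟩
  | there => exact .inr rfl

theorem OneStep.app_arg {a b : Term F} (h : OneStep R a b) (f : F) (pre post : List (Term F)) :
    OneStep R (.app f (pre ++ a :: post)) (.app f (pre ++ b :: post)) := by
  obtain ⟨ρ, hρ, σ, p, hsub, hrep⟩ := h
  have hi : (pre ++ a :: post)[pre.length]? = some a := by simp
  refine ⟨ρ, hρ, σ, pre.length :: p, .there hi hsub, ?_⟩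
  simpa using ReplaceAt.there (f := f) hi hrep

theorem exists_starRW_app_normalForm (hT : Terminating R) (f : F) (pre us : List (Term F)) :
    ∃ ws, (∀ w ∈ ws, NormalForm R w) ∧ StarRW R (.app f (pre ++ us)) (.app f (pre ++ ws)) := by
  induction us generalizing pre with
  | nil => exact ⟨[], by simp, .refl⟩
  | cons u us ih =>
    obtain ⟨v, huv, hv⟩ := exists_nfOf hT u
    obtain ⟨ws, hws, hstar⟩ := ih (pre ++ [v])
    refine ⟨v :: ws, by simpa [hv] using hws, ?_⟩
    have hu : StarRW R (.app f (pre ++ u :: us)) (.app f (pre ++ v :: us)) :=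
      Relation.ReflTransGen.lift (fun x => Term.app f (pre ++ x :: us))
        (fun _ _ h => h.app_arg f pre us) u v huv
    simp only [List.append_assoc, List.cons_append, List.nil_append] at hstar
    exact hu.trans hstar

theorem exists_rootStep_of_plus {s t : Term F} (h : Plus R s t) (hne : s.root ≠ t.root) :
    ∃ ρ ∈ R, ∃ σ, (ρ.1.subst σ).root = s.root ∧ Plus R s (ρ.2.subst σ) ∧
      StarRW R (ρ.2.subst σ) t := by
  induction h using Relation.TransGen.head_induction_on with
  | single hst =>
    rcases hst.rootStep_or_root_eq with ⟨ρ, hρ, σ, rfl, rfl⟩ | heq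
    · exact ⟨ρ, hρ, σ, rfl, .single hst, .refl⟩
    · exact absurd heq hne
  | head hsu hut ih =>
    rcases hsu.rootStep_or_root_eq with ⟨ρ, hρ, σ, rfl, rfl⟩ | heq
    · exact ⟨ρ, hρ, σ, rfl, .single hsu, hut.to_reflTransGen⟩
    · obtain ⟨ρ, hρ, σ, hroot, hplus, hstar⟩ := ih (heq ▸ hne)
      exact ⟨ρ, hρ, σ, hroot.trans heq.symm, .head hsu hplus, hstar⟩

end Rewriting

section ForwardClosed

variable {R : TRS F}

theorem epsIrreducible_app {c : F} {ws : List (Term F)} (hws : ∀ w ∈ ws, NormalForm R w) :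
    EpsIrreducible R (.app c ws) := by
  rintro _ u (_ | ⟨hi, hsub⟩) hp
  · exact absurd rfl hp
  · exact (hws _ (List.mem_of_getElem? hi)).subtermAt hsub

theorem EpsIrreducible.rootStep {t w : Term F} (ht : EpsIrreducible R t) (h : OneStep R t w) :
    RootStep R t w := by
  obtain ⟨ρ, hρ, σ, p, hsub, hrep⟩ := h
  cases p with
  | nil => exact ⟨ρ, hρ, σ, by cases hsub; rfl, by cases hrep; rfl⟩
  | cons => exact absurd ⟨ρ, hρ, σ, [], .here _, .here _ _⟩ (ht _ _ hsub (List.cons_ne_nil _ _) _)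

theorem FCclosed.root_nfOf (hFC : FCclosed R) (hC : Convergent R)
    (hlhs : ∀ ρ ∈ R, ¬ ρ.1.IsVar) {u w : Term F} {c : F} (hu : u.root = some c)
    (huw : NFof R u w) :
    w.root = some c ∨ ∃ ρ ∈ R, ∃ τ, ρ.1.root = some c ∧ w = ρ.2.subst τ := by
  obtain ⟨us, rfl⟩ : ∃ us, u = .app c us := by
    cases u <;> simp_all [Term.root]
  obtain ⟨ws, hws, hstar⟩ := exists_starRW_app_normalForm hC.2 c [] us
  have hnf : NFof R (.app c ws) w := huw.of_starRW hC.1 hstar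
  by_cases hred : NormalForm R (.app c ws)
  · exact .inl (hred.eq_of_starRW hnf.1 ▸ rfl)
  · have hinner : EpsIrreducible R (.app c ws) := epsIrreducible_app hws
    obtain ⟨ρ, hρ, τ, hlhs', rfl⟩ := hinner.rootStep (hFC _ ⟨hinner, hred⟩ w hnf)
    exact .inr ⟨ρ, hρ, τ, by rw [← Term.root_subst (hlhs ρ hρ) τ, ← hlhs']; rfl, rfl⟩

end ForwardClosed

section Unification

open Term

def UnifiesAll (τ : Nat → Term F) (ps : List (Term F × Term F)) : Prop :=
  ∀ p ∈ ps, Unifies τ p.1 p.2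

def IsMGUAll (σ : Nat → Term F) (ps : List (Term F × Term F)) : Prop :=
  UnifiesAll σ ps ∧ ∀ τ, UnifiesAll τ ps → ∃ δ, ∀ x, τ x = (σ x).subst δ

def varsAll (ps : List (Term F × Term F)) : Finset Nat :=
  (ps.flatMap fun p => p.1.varsL ++ p.2.varsL).toFinset

def sizeAll (ps : List (Term F × Term F)) : Nat :=
  (ps.map fun p => p.1.size + p.2.size).sum

def substAll (θ : Nat → Term F) (ps : List (Term F × Term F)) : List (Term F × Term F) :=
  ps.map fun p => (p.1.subst θ, p.2.subst θ)

theorem mem_varsAll {n : Nat} {ps : List (Term F × Term F)} :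
    n ∈ varsAll ps ↔ ∃ p ∈ ps, n ∈ p.1.varsL ∨ n ∈ p.2.varsL := by
  simp [varsAll]

theorem unifies_var_iff {τ : Nat → Term F} {x : Nat} {v : Term F} :
    Unifies τ (var x) v ↔ τ x = v.subst τ := by
  rw [Unifies, subst_var]

theorem unifiesAll_cons {τ : Nat → Term F} {a b : Term F} {ps : List (Term F × Term F)} :
    UnifiesAll τ ((a, b) :: ps) ↔ Unifies τ a b ∧ UnifiesAll τ ps := by
  simp [UnifiesAll]

theorem unifiesAll_append {τ : Nat → Term F} {ps qs : List (Term F × Term F)} :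
    UnifiesAll τ (ps ++ qs) ↔ UnifiesAll τ ps ∧ UnifiesAll τ qs := by
  simp [UnifiesAll, or_imp, forall_and]

theorem unifiesAll_substAll {θ τ : Nat → Term F} {ps : List (Term F × Term F)} :
    UnifiesAll τ (substAll θ ps) ↔ UnifiesAll (fun n => (θ n).subst τ) ps := by
  simp only [UnifiesAll, substAll, List.forall_mem_map, Unifies, subst_subst]

theorem unifies_app_iff {τ : Nat → Term F} {f : F} {us vs : List (Term F)}
    (hlen : us.length = vs.length) :
    Unifies τ (app f us) (app f vs) ↔ UnifiesAll τ (us.zip vs) := by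
  rw [Unifies, subst_app, subst_app, app.injEq, ← List.forall₂_eq_eq_eq,
    List.forall₂_map_left_iff, List.forall₂_map_right_iff, List.forall₂_iff_zip]
  simp [UnifiesAll, Unifies, hlen]

theorem Unifies.not_mem_varsL {τ : Nat → Term F} {x : Nat} {v : Term F}
    (h : Unifies τ (var x) v) (hv : v ≠ var x) : x ∉ v.varsL :=
  fun hx => hv (eq_var_of_subst_eq hx (unifies_var_iff.1 h))

theorem Unifies.app_app {τ : Nat → Term F} {f g : F} {us vs : List (Term F)}
    (h : Unifies τ (app f us) (app g vs)) : f = g ∧ us.length = vs.length := by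
  simp only [Unifies, subst_app, app.injEq] at h
  exact ⟨h.1, by simpa using congrArg List.length h.2⟩

theorem IsMGUAll.of_iff {σ : Nat → Term F} {ps qs : List (Term F × Term F)}
    (h : ∀ τ, UnifiesAll τ ps ↔ UnifiesAll τ qs) (hσ : IsMGUAll σ qs) : IsMGUAll σ ps :=
  ⟨(h σ).2 hσ.1, fun τ hτ => hσ.2 τ ((h τ).1 hτ)⟩

theorem update_var_subst {τ : Nat → Term F} {x : Nat} {v : Term F} (h : τ x = v.subst τ) :
    (fun n => (Function.update var x v n).subst τ) = τ := by
  funext n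
  by_cases hn : n = x
  · subst hn; simp [h]
  · simp [hn]

theorem IsMGUAll.cons_var {σ : Nat → Term F} {x : Nat} {v : Term F}
    {ps : List (Term F × Term F)} (hx : x ∉ v.varsL)
    (hσ : IsMGUAll σ (substAll (Function.update var x v) ps)) :
    IsMGUAll (fun n => (Function.update var x v n).subst σ) ((var x, v) :: ps) := by
  set θ : Nat → Term F := Function.update var x v
  have hv : v.subst θ = v := subst_eq_self fun n hn => by
    simp [θ, show n ≠ x from fun h => hx (h ▸ hn)]
  refine ⟨unifiesAll_cons.2 ⟨?_, unifiesAll_substAll.1 hσ.1⟩, fun τ hτ => ?_⟩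
  · simp [Unifies, θ, ← subst_subst, hv]
  · have hθτ := update_var_subst (unifies_var_iff.1 (unifiesAll_cons.1 hτ).1)
    obtain ⟨δ, hδ⟩ := hσ.2 τ (by rw [unifiesAll_substAll, hθτ]; exact (unifiesAll_cons.1 hτ).2)
    refine ⟨δ, fun n => ?_⟩
    rw [subst_subst, ← funext hδ, ← congrFun hθτ n]

theorem varsAll_substAll_subset {x : Nat} {v : Term F} (hx : x ∉ v.varsL)
    (ps : List (Term F × Term F)) :
    varsAll (substAll (Function.update var x v) ps) ⊆ (varsAll ((var x, v) :: ps)).erase x := by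
  intro n hn
  obtain ⟨_, hp, hn⟩ := mem_varsAll.1 hn
  obtain ⟨q, hq, rfl⟩ := List.mem_map.1 hp
  obtain ⟨hnx, hn⟩ : n ≠ x ∧ ((n ∈ q.1.varsL ∨ n ∈ q.2.varsL) ∨ n ∈ v.varsL) := by
    rcases hn with hn | hn <;> obtain ⟨hnx, hn | hn⟩ := mem_varsL_subst_update hx hn <;> tauto
  refine Finset.mem_erase.2 ⟨hnx, mem_varsAll.2 ?_⟩
  rcases hn with hn | hn
  · exact ⟨q, List.mem_cons_of_mem _ hq, hn⟩
  · exact ⟨_, List.mem_cons_self, .inr hn⟩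

theorem card_varsAll_substAll_lt {x : Nat} {v : Term F} (hx : x ∉ v.varsL)
    (ps : List (Term F × Term F)) :
    (varsAll (substAll (Function.update var x v) ps)).card < (varsAll ((var x, v) :: ps)).card :=
  Finset.card_lt_card <| (Finset.ssubset_of_subset_of_ssubset (varsAll_substAll_subset hx ps)
    (Finset.erase_ssubset (by simp [varsAll, varsL])))

theorem varsAll_zip_append_subset (f g : F) (us vs : List (Term F))
    (ps : List (Term F × Term F)) :
    varsAll (us.zip vs ++ ps) ⊆ varsAll ((app f us, app g vs) :: ps) := by
  intro n hn
  obtain ⟨⟨a, b⟩, hab, hn⟩ := mem_varsAll.1 hn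
  refine mem_varsAll.2 ?_
  rcases List.mem_append.1 hab with hab | hab
  · have ⟨ha, hb⟩ := List.of_mem_zip hab
    exact ⟨_, List.mem_cons_self, hn.imp (mem_varsL_app.2 ⟨a, ha, ·⟩) (mem_varsL_app.2 ⟨b, hb, ·⟩)⟩
  · exact ⟨_, List.mem_cons_of_mem _ hab, hn⟩

theorem sizeAll_zip_le (us vs : List (Term F)) :
    sizeAll (us.zip vs) ≤ (us.map size).sum + (vs.map size).sum := by
  induction us generalizing vs with
  | nil => simp [sizeAll]
  | cons u us ih =>
    cases vs with
    | nil => simp [sizeAll]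
    | cons v vs =>
      have := ih vs
      simp only [List.zip_cons_cons, sizeAll, List.map_cons, List.sum_cons] at *
      omega

theorem UnifiesAll.substAll_update {τ : Nat → Term F} {x : Nat} {v : Term F}
    {ps : List (Term F × Term F)} (h : UnifiesAll τ ((var x, v) :: ps)) :
    UnifiesAll τ (substAll (Function.update var x v) ps) := by
  rw [unifiesAll_cons] at h
  rw [unifiesAll_substAll, update_var_subst (unifies_var_iff.1 h.1)]
  exact h.2

theorem unifiesAll_cons_swap {τ : Nat → Term F} {a b : Term F} {ps : List (Term F × Term F)} :
    UnifiesAll τ ((a, b) :: ps) ↔ UnifiesAll τ ((b, a) :: ps) := by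
  simp only [unifiesAll_cons, Unifies, eq_comm]

theorem varsAll_cons_swap (a b : Term F) (ps : List (Term F × Term F)) :
    varsAll ((a, b) :: ps) = varsAll ((b, a) :: ps) := by
  ext n
  simp only [mem_varsAll, List.exists_mem_cons_iff, Or.comm (a := n ∈ a.varsL)]

theorem varsAll_subset_cons (p : Term F × Term F) (ps : List (Term F × Term F)) :
    varsAll ps ⊆ varsAll (p :: ps) := by
  intro n
  simp only [mem_varsAll, List.mem_cons]
  exact fun ⟨q, hq, hn⟩ => ⟨q, .inr hq, hn⟩

theorem lex_lt_of_le_of_lt {a b c d : Nat} (h₁ : a ≤ c) (h₂ : b < d) :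
    Prod.Lex (· < ·) (· < ·) (a, b) (c, d) :=
  Prod.lex_def.2 (by omega)

theorem exists_isMGUAll : ∀ ps : List (Term F × Term F), (∃ τ, UnifiesAll τ ps) →
    ∃ σ, IsMGUAll σ ps
  | [], _ => ⟨var, by simp [UnifiesAll], fun τ _ => ⟨τ, by simp⟩⟩
  | (var x, v) :: ps, ⟨τ, hτ⟩ => by
    by_cases hv : v = var x
    · subst hv
      have hdel : ∀ τ, UnifiesAll τ ((var x, var x) :: ps) ↔ UnifiesAll τ ps := by
        simp [unifiesAll_cons, Unifies]
      obtain ⟨σ, hσ⟩ := exists_isMGUAll ps ⟨τ, (hdel τ).1 hτ⟩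
      exact ⟨σ, hσ.of_iff hdel⟩
    · have hx : x ∉ v.varsL := (unifiesAll_cons.1 hτ).1.not_mem_varsL hv
      obtain ⟨σ, hσ⟩ := exists_isMGUAll _ ⟨τ, hτ.substAll_update⟩
      exact ⟨_, hσ.cons_var hx⟩
  | (app f us, var y) :: ps, ⟨τ, hτ⟩ => by
    rw [unifiesAll_cons_swap] at hτ
    have hy : y ∉ (app f us).varsL := (unifiesAll_cons.1 hτ).1.not_mem_varsL (by simp)
    obtain ⟨σ, hσ⟩ := exists_isMGUAll _ ⟨τ, hτ.substAll_update⟩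
    exact ⟨_, (hσ.cons_var hy).of_iff fun _ => unifiesAll_cons_swap⟩
  | (app f us, app g vs) :: ps, ⟨τ, hτ⟩ => by
    obtain ⟨rfl, hlen⟩ := (unifiesAll_cons.1 hτ).1.app_app
    have hdec : ∀ τ, UnifiesAll τ ((app f us, app f vs) :: ps) ↔ UnifiesAll τ (us.zip vs ++ ps) :=
      fun τ => by rw [unifiesAll_cons, unifies_app_iff hlen, unifiesAll_append]
    obtain ⟨σ, hσ⟩ := exists_isMGUAll (us.zip vs ++ ps) ⟨τ, (hdec τ).1 hτ⟩
    exact ⟨σ, hσ.of_iff hdec⟩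
-- elimination removes a variable; deletion and decomposition shrink the size and add no variable
termination_by ps => ((varsAll ps).card, sizeAll ps)
decreasing_by
  · refine lex_lt_of_le_of_lt (Finset.card_le_card (varsAll_subset_cons _ ps)) ?_
    have := (var x : Term F).size_pos
    simp only [sizeAll, List.map_cons, List.sum_cons]
    omega
  · exact Prod.Lex.left _ _ (card_varsAll_substAll_lt hx ps)
  · rw [varsAll_cons_swap]
    exact Prod.Lex.left _ _ (card_varsAll_substAll_lt hy ps)
  · refine lex_lt_of_le_of_lt (Finset.card_le_card (varsAll_zip_append_subset f g us vs ps)) ?_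
    have := sizeAll_zip_le us vs
    simp only [sizeAll, List.map_append, List.sum_append, List.map_cons, List.sum_cons,
      size_app] at *
    omega

theorem exists_isMGU {u v : Term F} (h : ∃ τ, Unifies τ u v) : ∃ σ, IsMGU σ u v := by
  have hsingle : ∀ τ, UnifiesAll τ [(u, v)] ↔ Unifies τ u v := by simp [UnifiesAll]
  obtain ⟨σ, hσ⟩ := exists_isMGUAll [(u, v)] (by simpa [hsingle] using h)
  exact ⟨σ, (hsingle σ).1 hσ.1, fun τ hτ => hσ.2 τ ((hsingle τ).2 hτ)⟩

end Unification

section LMSystem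

variable {R : TRS F}

theorem QuasiDet.not_reversed {E : TRS F} (hE : QuasiDet E) {e₁ e₂ : Rule F} (h₁ : e₁ ∈ E)
    (h₂ : e₂ ∈ E) (h₁₂ : e₁.1.root = e₂.2.root) (h₂₁ : e₁.2.root = e₂.1.root) : False := by
  by_cases he : e₁ = e₂
  · subst he
    exact hE.2.1 e₁ h₁ h₁₂
  · exact hE.2.2 e₁ h₁ e₂ h₂ he (.inr ⟨h₁₂, h₂₁⟩)

theorem exists_mem_RHSset_of_subst_eq {l₁ r₁ l₂ r₂ : Term F} (h₁ : (l₁, r₁) ∈ R)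
    (h₂ : (l₂, r₂) ∈ R) (hl₁ : ¬ l₁.IsVar) (hl₂ : ¬ l₂.IsVar) (hroot : l₁.root ≠ l₂.root)
    {τ₁ τ₂ : Nat → Term F} (heq : r₁.subst τ₁ = r₂.subst τ₂) :
    ∃ e ∈ RHSset R, e.1.root = l₁.root ∧ e.2.root = l₂.root := by
  -- rename `(l₂, r₂)` apart by shifting its variables beyond those of `r₁`
  set M := r₁.varsL.sum + 1
  set ρ : Nat → Term F := fun n => .var (n + M)
  have hρ : IsRenaming ρ := ⟨(· + M), add_left_injective M, fun _ => rfl⟩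
  have hunif : Unifies (fun n => if n < M then τ₁ n else τ₂ (n - M)) r₁ (r₂.subst ρ) := by
    rw [Unifies, Term.subst_subst,
      Term.subst_congr fun n hn => if_pos (Nat.lt_succ_of_le (List.le_sum_of_mem hn))]
    simpa [ρ] using heq
  obtain ⟨σ, hσ⟩ := exists_isMGU ⟨_, hunif⟩
  have hl₂ρ : ¬ (l₂.subst ρ).IsVar := by
    obtain ⟨f, ts, rfl⟩ := Term.not_isVar_iff.1 hl₂
    simp [Term.IsVar]
  have hroot₁ : (l₁.subst σ).root = l₁.root := Term.root_subst hl₁ σ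
  have hroot₂ : ((l₂.subst ρ).subst σ).root = l₂.root := by
    rw [Term.root_subst hl₂ρ, Term.root_subst hl₂]
  refine ⟨_, .inr ⟨l₁, r₁, l₂, r₂, ρ, σ, h₁, h₂, hρ, hσ, fun h => hroot ?_, rfl⟩, hroot₁, hroot₂⟩
  rw [← hroot₁, h, hroot₂]

theorem Terminating.wellFounded_plus (hT : Terminating R) :
    WellFounded fun a b : Term F => Plus R b a :=
  Subrelation.wf Relation.transGen_swap.2 hT.transGen

theorem LMSystem.lhs_not_isVar (hlm : LMSystem R) {ρ : Rule F} (hρ : ρ ∈ R) : ¬ ρ.1.IsVar :=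
  (hlm.quasiDet.1 ρ (.inl hρ)).1

theorem LMSystem.rhs_not_isVar (hlm : LMSystem R) {ρ : Rule F} (hρ : ρ ∈ R) : ¬ ρ.2.IsVar :=
  (hlm.quasiDet.1 ρ (.inl hρ)).2

theorem LMSystem.lhs_root_ne_rhs_root (hlm : LMSystem R) {ρ : Rule F} (hρ : ρ ∈ R) :
    ρ.1.root ≠ ρ.2.root :=
  hlm.quasiDet.2.1 ρ (.inl hρ)

theorem LMSystem.root_eq_of_nfOf (hlm : LMSystem R) {l r : Term F} (hrule : (l, r) ∈ R)
    {f g : F} (hl : l.root = some f) (hr : r.root = some g) {s t w : Term F}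
    (hs : s.root = some g) (ht : t.root = some f) (hsw : NFof R s w) (htw : NFof R t w) :
    w.root = some g := by
  have hlhs : ∀ ρ ∈ R, ¬ ρ.1.IsVar := fun ρ hρ => hlm.lhs_not_isVar hρ
  rcases hlm.forwardClosed.root_nfOf hlm.convergent hlhs hs hsw with hw | ⟨ρ₁, hρ₁, τ₁, hρ₁g, rfl⟩
  · exact hw
  exfalso
  rcases hlm.forwardClosed.root_nfOf hlm.convergent hlhs ht htw with
    hw | ⟨ρ₂, hρ₂, τ₂, hρ₂f, heq⟩
  · refine hlm.quasiDet.not_reversed (.inl hrule) (.inl hρ₁) ?_ (by rw [hr, hρ₁g])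
    rw [hl, ← hw, Term.root_subst (hlm.rhs_not_isVar hρ₁)]
  · have hne : ρ₁.1.root ≠ ρ₂.1.root := by
      rw [hρ₁g, hρ₂f, ← hl, ← hr]
      exact (hlm.lhs_root_ne_rhs_root hrule).symm
    obtain ⟨e, he, he₁, he₂⟩ := exists_mem_RHSset_of_subst_eq hρ₁ hρ₂ (hlhs ρ₁ hρ₁)
      (hlhs ρ₂ hρ₂) hne heq
    exact hlm.quasiDet.not_reversed (.inl hrule) he (by rw [he₂, hl, hρ₂f])
      (by rw [he₁, hr, hρ₁g])

end LMSystem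

theorem no_reversals_general {F : Type} (R : TRS F) (hlm : LMSystem R)
    (l r : Term F) (hrule : (l, r) ∈ R)
    (f g : F) (hl : l.root = some f) (hr : r.root = some g) :
    ∀ s t : Term F, s.root = some g → t.root = some f → ¬ Plus R s t := by
  intro s
  induction s using hlm.convergent.2.wellFounded_plus.induction generalizing l r f g with
  | _ s ih =>
  intro t hs ht hst
  obtain ⟨w, htw⟩ := exists_nfOf hlm.convergent.2 t
  have hw : w.root = some g :=
    hlm.root_eq_of_nfOf hrule hl hr hs ht ⟨hst.to_reflTransGen.trans htw.1, htw.2⟩ htw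
  have hroot : s.root ≠ t.root := by
    rw [hs, ht, ← hl, ← hr]
    exact (hlm.lhs_root_ne_rhs_root hrule).symm
  obtain ⟨ρ, hρ, σ, hρs, hsρ, hρt⟩ := exists_rootStep_of_plus hst hroot
  obtain ⟨h, hh⟩ := Term.exists_root_eq_some (hlm.rhs_not_isVar hρ)
  have hρg : ρ.1.root = some g := by rw [← Term.root_subst (hlm.lhs_not_isVar hρ) σ, hρs, hs]
  have hρσ : (ρ.2.subst σ).root = some h := by rw [Term.root_subst (hlm.rhs_not_isVar hρ), hh]
  refine ih _ hsρ ρ.1 ρ.2 hρ g h hρg hh w hρσ hw (.of_starRW_of_ne (hρt.trans htw.1) ?_)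
  rintro rfl
  exact hlm.lhs_root_ne_rhs_root hρ (by rw [hρg, hh, ← hρσ, hw])

/-- if an LM-system has a rule with root pair `(f, g)`, `f ≠ g`, then no
term with root `g` reduces (in one or more steps) to a term with root `f`. -/
theorem no_reversals {F : Type} (R : TRS F) (hlm : LMSystem R)
    (l r : Term F) (hrule : (l, r) ∈ R)
    (f g : F) (hl : l.root = some f) (hr : r.root = some g) (hfg : f ≠ g) :
    ∀ s t : Term F, s.root = some g → t.root = some f → ¬ Plus R s t :=
  no_reversals_general R hlm l r hrule f g hl hr
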